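/- arXiv:2403.02826 — 7 statements merged into one kernel-verified Lean document; each statement's English description precedes it below -/
import Mathlib

section
/- Let G be a finite simple graph such that any two adjacent vertices of G are the endpoints of some path on 4 vertices in G. Then the chromatic number of G is at most the e-injective chromatic number of G, i.e., χ(G) ≤ χ_ei(G). Conversely, if G is a finite simple graph in which the two endpoints of every path on 4 vertices are adjacent, then χ_ei(G) ≤ χ(G). -/
open SimpleGraph

/-- `u` and `v` are the endpoints of a path on 4 vertices (a `P₄`, of length 3) in `G`:
a walk `u - x - y - v` with pairwise distinct vertices and consecutive vertices adjacent. -/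
def P4Ends {V : Type*} (G : SimpleGraph V) (u v : V) : Prop :=
  ∃ x y : V, u ≠ x ∧ u ≠ y ∧ u ≠ v ∧ x ≠ y ∧ x ≠ v ∧ y ≠ v ∧
    G.Adj u x ∧ G.Adj x y ∧ G.Adj y v

/-- `f` is an e-injective coloring of `G` (with colors in `Fin k`). -/
def IsEInjColoring {V : Type*} (G : SimpleGraph V) {k : ℕ} (f : V → Fin k) : Prop :=
  ∀ u v : V, P4Ends G u v → f u ≠ f v

/-- The e-injective chromatic number `χ_ei`. -/
noncomputable def eChi {V : Type*} (G : SimpleGraph V) : ℕ :=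
  sInf {k : ℕ | ∃ f : V → Fin k, IsEInjColoring G f}

/-- The usual chromatic number, as a natural number. -/
noncomputable def chi {V : Type*} (G : SimpleGraph V) : ℕ :=
  sInf {k : ℕ | ∃ f : V → Fin k, ∀ u v : V, G.Adj u v → f u ≠ f v}

/-- The injective chromatic number `χ_i`. -/
noncomputable def iChi {V : Type*} (G : SimpleGraph V) : ℕ :=
  sInf {k : ℕ | ∃ f : V → Fin k, ∀ u v : V, u ≠ v →
    (∃ w, G.Adj w u ∧ G.Adj w v) → f u ≠ f v}

/-- The 2-distance chromatic number `χ₂`. -/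
noncomputable def dist2Chi {V : Type*} (G : SimpleGraph V) : ℕ :=
  sInf {k : ℕ | ∃ f : V → Fin k, ∀ u v : V, u ≠ v →
    (G.Adj u v ∨ ∃ w, G.Adj u w ∧ G.Adj w v) → f u ≠ f v}

/-- The join `G ∨ H` of two graphs on disjoint vertex sets. -/
def joinGraph {V W : Type*} (G : SimpleGraph V) (H : SimpleGraph W) :
    SimpleGraph (V ⊕ W) where
  Adj x y :=
    match x, y with
    | Sum.inl a, Sum.inl b => G.Adj a b
    | Sum.inr a, Sum.inr b => H.Adj a b
    | Sum.inl _, Sum.inr _ => True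
    | Sum.inr _, Sum.inl _ => True
  symm := by constructor; rintro (a | a) (b | b) h <;> simp_all <;> exact h.symm
  loopless := by constructor; rintro (a | a) h <;> simp_all

/-- The strong product `G ⊠ H`. -/
def strongProd {V W : Type*} (G : SimpleGraph V) (H : SimpleGraph W) :
    SimpleGraph (V × W) where
  Adj x y := (x.1 = y.1 ∧ H.Adj x.2 y.2) ∨ (x.2 = y.2 ∧ G.Adj x.1 y.1) ∨
    (G.Adj x.1 y.1 ∧ H.Adj x.2 y.2)
  symm := by
    constructor
    rintro ⟨a, u⟩ ⟨b, v⟩ (⟨h1, h2⟩ | ⟨h1, h2⟩ | ⟨h1, h2⟩)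
    · exact Or.inl ⟨h1.symm, h2.symm⟩
    · exact Or.inr (Or.inl ⟨h1.symm, h2.symm⟩)
    · exact Or.inr (Or.inr ⟨h1.symm, h2.symm⟩)
  loopless := by constructor; rintro ⟨a, u⟩ (⟨_, h⟩ | ⟨_, h⟩ | ⟨h, _⟩) <;> exact h.ne rfl

theorem stmt_0 {V : Type*} [Fintype V] (G : SimpleGraph V) :
    ((∀ u v : V, G.Adj u v → P4Ends G u v) → chi G ≤ eChi G) ∧
    ((∀ u v : V, P4Ends G u v → G.Adj u v) → eChi G ≤ chi G) := by
  classical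
  have hne : ∀ (P : V → V → Prop) (hP : ∀ u v, P u v → u ≠ v),
      ∃ k, ∃ f : V → Fin k, ∀ u v, P u v → f u ≠ f v := by
    intro P hP
    exact ⟨Fintype.card V, Fintype.equivFin V, fun u v h hf =>
      hP u v h ((Fintype.equivFin V).injective hf)⟩
  constructor
  · intro h
    have hE : {k : ℕ | ∃ f : V → Fin k, IsEInjColoring G f}.Nonempty := by
      obtain ⟨k, f, hf⟩ := hne (P4Ends G) (fun u v ⟨x, y, hs⟩ => hs.2.2.1)
      exact ⟨k, f, hf⟩
    have hmem := Nat.sInf_mem hE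
    obtain ⟨f, hf⟩ := hmem
    exact Nat.sInf_le ⟨f, fun u v huv => hf u v (h u v huv)⟩
  · intro h
    have hC : {k : ℕ | ∃ f : V → Fin k, ∀ u v : V, G.Adj u v → f u ≠ f v}.Nonempty := by
      obtain ⟨k, f, hf⟩ := hne G.Adj (fun u v huv => huv.ne)
      exact ⟨k, f, hf⟩
    have hmem := Nat.sInf_mem hC
    obtain ⟨f, hf⟩ := hmem
    exact Nat.sInf_le ⟨f, fun u v huv => hf u v (h u v huv)⟩
end

section
/- Let G and H be finite simple graphs of orders m and n respectively, each having at least one edge. Then the e-injective chromatic number of the join G ∨ H equals m + n. -/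
open SimpleGraph

theorem stmt_4 {V W : Type*} [Fintype V] [Fintype W] (G : SimpleGraph V) (H : SimpleGraph W)
    (hG : ∃ a b : V, G.Adj a b) (hH : ∃ a b : W, H.Adj a b) :
    eChi (joinGraph G H) = Fintype.card V + Fintype.card W := by
  classical
  obtain ⟨a, b, hab⟩ := hG
  obtain ⟨c, d, hcd⟩ := hH
  -- every pair of distinct vertices of the join are P4-endpoints
  have key : ∀ u v : V ⊕ W, u ≠ v → P4Ends (joinGraph G H) u v := by
    rintro (p | p) (q | q) huv
    · exact ⟨Sum.inr c, Sum.inr d, by simp, by simp, huv, by simpa using hcd.ne,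
        by simp, by simp, trivial, hcd, trivial⟩
    · -- inl p, inr q : path inl p - inr w - inl z - inr q with w ≠ q, z ≠ p
      obtain ⟨w, hw⟩ : ∃ w : W, w ≠ q := by
        by_cases h : c = q
        · exact ⟨d, by rintro rfl; exact hcd.ne h⟩
        · exact ⟨c, h⟩
      obtain ⟨z, hz⟩ : ∃ z : V, z ≠ p := by
        by_cases h : a = p
        · exact ⟨b, by rintro rfl; exact hab.ne h⟩
        · exact ⟨a, h⟩
      exact ⟨Sum.inr w, Sum.inl z, by simp, by simpa using fun h => hz h.symm, huv,
        by simp, by simpa using hw, by simp, trivial, trivial, trivial⟩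
    · -- inr p, inl q
      obtain ⟨w, hw⟩ : ∃ w : W, w ≠ p := by
        by_cases h : c = p
        · exact ⟨d, by rintro rfl; exact hcd.ne h⟩
        · exact ⟨c, h⟩
      obtain ⟨z, hz⟩ : ∃ z : V, z ≠ q := by
        by_cases h : a = q
        · exact ⟨b, by rintro rfl; exact hab.ne h⟩
        · exact ⟨a, h⟩
      exact ⟨Sum.inl z, Sum.inr w, by simp, by simpa using fun h => hw h.symm, huv,
        by simp, by simpa using hz, by simp, trivial, trivial, trivial⟩
    · exact ⟨Sum.inl a, Sum.inl b, by simp, by simp, huv, by simpa using hab.ne,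
        by simp, by simp, trivial, hab, trivial⟩
  have hcard : Fintype.card (V ⊕ W) = Fintype.card V + Fintype.card W := by simp
  have hmem : (Fintype.card V + Fintype.card W) ∈
      {k : ℕ | ∃ f : V ⊕ W → Fin k, IsEInjColoring (joinGraph G H) f} := by
    refine ⟨fun x => finCongr hcard (Fintype.equivFin (V ⊕ W) x), ?_⟩
    intro u v huv heq
    obtain ⟨x, y, _, _, hne, _⟩ := huv
    exact hne ((Fintype.equivFin (V ⊕ W)).injective ((finCongr hcard).injective heq))
  refine le_antisymm (Nat.sInf_le hmem) (le_csInf ⟨_, hmem⟩ ?_)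
  rintro k ⟨f, hf⟩
  have hinj : Function.Injective f := by
    intro u v h
    by_contra hne
    exact hf u v (key u v hne) h
  calc Fintype.card V + Fintype.card W = Fintype.card (V ⊕ W) := hcard.symm
    _ ≤ Fintype.card (Fin k) := Fintype.card_le_of_injective f hinj
    _ = k := Fintype.card_fin k
end

section
/- Let G be a finite simple graph with maximum degree Δ. Then χ_ei(G) ≤ Δ(Δ − 1)² + 1. -/
open SimpleGraph

section GreedyAux

universe u
open Finset

lemma greedy_col : ∀ (n : ℕ) (V : Type u) [Fintype V], Fintype.card V = n →
    ∀ (R : V → V → Prop) [DecidableRel R], (∀ u v, R u v → R v u) →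
    (∀ v, ¬ R v v) → ∀ (d : ℕ),
    (∀ v, (univ.filter (R v)).card ≤ d) →
    ∃ f : V → Fin (d+1), ∀ u v, R u v → f u ≠ f v := by
  intro n
  induction n with
  | zero =>
    intro V _ hc R _ _ _ d _
    haveI : IsEmpty V := Fintype.card_eq_zero_iff.mp hc
    exact ⟨isEmptyElim, fun u => isEmptyElim u⟩
  | succ n ih =>
    intro V _ hc R _ hsym hirr d hdeg
    classical
    have hne : Nonempty V := Fintype.card_pos_iff.mp (by omega)
    obtain ⟨v0⟩ := hne
    have hc' : Fintype.card {u : V // u ≠ v0} = n := by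
      simp only [ne_eq]
      rw [Fintype.card_subtype_compl, Fintype.card_subtype_eq, hc]
      omega
    obtain ⟨f', hf'⟩ := ih {u : V // u ≠ v0} hc'
      (fun a b => R a.1 b.1) (fun a b h => hsym _ _ h) (fun a => hirr a.1) d
      (fun a => by
        refine le_trans (Finset.card_le_card_of_injOn Subtype.val ?_ ?_) (hdeg a.1)
        · intro b hb; simp only [mem_coe, mem_filter, mem_univ, true_and] at hb ⊢; exact hb
        · exact fun x _ y _ h => Subtype.ext h)
    set forbidden : Finset (Fin (d+1)) :=
      (univ.filter (fun u : {u : V // u ≠ v0} => R v0 u.1)).image f' with hforb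
    have hfcard : forbidden.card ≤ d := by
      refine le_trans Finset.card_image_le ?_
      refine le_trans (Finset.card_le_card_of_injOn Subtype.val ?_ ?_) (hdeg v0)
      · intro b hb; simp only [mem_coe, mem_filter, mem_univ, true_and] at hb ⊢; exact hb
      · exact fun x _ y _ h => Subtype.ext h
    have hcex : ∃ c : Fin (d+1), c ∉ forbidden := by
      by_contra h
      push_neg at h
      have : (univ : Finset (Fin (d+1))) ⊆ forbidden := fun c _ => h c
      have := Finset.card_le_card this
      simp at this
      omega
    obtain ⟨c, hc0⟩ := hcex
    refine ⟨fun u => if h : u = v0 then c else f' ⟨u, h⟩, ?_⟩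
    intro u v hR
    by_cases hu : u = v0 <;> by_cases hv : v = v0 <;> dsimp only
    · subst hu; subst hv; exact absurd hR (hirr _)
    · rw [dif_pos hu, dif_neg hv]
      intro heq
      apply hc0
      rw [heq]
      exact Finset.mem_image_of_mem f'
        (by simp only [mem_filter, mem_univ, true_and]; rw [← hu]; exact hR)
    · rw [dif_pos hv, dif_neg hu]
      intro heq
      apply hc0
      rw [← heq]
      exact Finset.mem_image_of_mem f'
        (by simp only [mem_filter, mem_univ, true_and]; rw [← hv]; exact hsym _ _ hR)
    · rw [dif_neg hu, dif_neg hv]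
      exact hf' ⟨u, hu⟩ ⟨v, hv⟩ hR


end GreedyAux

theorem stmt_6 {V : Type*} [Fintype V] (G : SimpleGraph V) [DecidableRel G.Adj] :
    eChi G ≤ G.maxDegree * (G.maxDegree - 1) ^ 2 + 1 := by
  classical
  set d := G.maxDegree * (G.maxDegree - 1) ^ 2 with hd
  have hdeg : ∀ u : V, (Finset.univ.filter (P4Ends G u)).card ≤ d := by
    intro u
    have hsub : Finset.univ.filter (P4Ends G u) ⊆
        (G.neighborFinset u).biUnion (fun x =>
          ((G.neighborFinset x).erase u).biUnion
            (fun y => (G.neighborFinset y).erase x)) := by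
      intro v hv
      simp only [Finset.mem_filter] at hv
      obtain ⟨x, y, hux, huy, huv, hxy, hxv, hyv, h1, h2, h3⟩ := hv.2
      refine Finset.mem_biUnion.mpr ⟨x, by simpa using h1, ?_⟩
      refine Finset.mem_biUnion.mpr ⟨y, Finset.mem_erase.mpr ⟨huy.symm, by simpa using h2⟩,
        Finset.mem_erase.mpr ⟨hxv.symm, by simpa using h3⟩⟩
    refine le_trans (Finset.card_le_card hsub) ?_
    refine le_trans (Finset.card_biUnion_le_card_mul _ _
      ((G.maxDegree - 1) * (G.maxDegree - 1)) ?_) ?_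
    · intro x hx
      have hux : G.Adj u x := by simpa using hx
      refine le_trans (Finset.card_biUnion_le_card_mul _ _ (G.maxDegree - 1) ?_) ?_
      · intro y hy
        have hxy : G.Adj x y := by
          have := (Finset.mem_erase.mp hy).2; simpa using this
        have hxmem : x ∈ G.neighborFinset y := by simpa using hxy.symm
        rw [Finset.card_erase_of_mem hxmem, SimpleGraph.card_neighborFinset_eq_degree]
        have := G.degree_le_maxDegree y
        omega
      · have humem : u ∈ G.neighborFinset x := by simpa using hux.symm
        rw [Finset.card_erase_of_mem humem, SimpleGraph.card_neighborFinset_eq_degree]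
        have := G.degree_le_maxDegree x
        exact Nat.mul_le_mul_right _ (by omega)
    · rw [SimpleGraph.card_neighborFinset_eq_degree, hd, pow_two]
      exact Nat.mul_le_mul (G.degree_le_maxDegree u) le_rfl
  obtain ⟨f, hf⟩ := greedy_col (Fintype.card V) V rfl (P4Ends G)
    (fun a b ⟨x, y, hux, huy, huv, hxy, hxv, hyv, h1, h2, h3⟩ =>
      ⟨y, x, hyv.symm, hxv.symm, huv.symm, hxy.symm, huy.symm, hux.symm,
        h3.symm, h2.symm, h1.symm⟩)
    (fun a ⟨x, y, _, _, hvv, _⟩ => hvv rfl) d hdeg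
  exact Nat.sInf_le ⟨f, hf⟩
end

section
/- For the path graph P_n on n ≥ 1 vertices: χ_ei(P_n) = 1 if n ≤ 3, and χ_ei(P_n) = 2 if n > 3. -/
open SimpleGraph

theorem stmt_9 (n : ℕ) (hn : 1 ≤ n) :
    (n ≤ 3 → eChi (pathGraph n) = 1) ∧ (3 < n → eChi (pathGraph n) = 2) := by
  have h0 : (0:ℕ) ∉ {k : ℕ | ∃ f : Fin n → Fin k, IsEInjColoring (pathGraph n) f} := by
    rintro ⟨f, -⟩
    exact (f ⟨0, hn⟩).elim0
  have hdist : ∀ u v : Fin n, P4Ends (pathGraph n) u v →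
      (u:ℕ) + 3 = v ∨ (v:ℕ) + 3 = u := by
    rintro u v ⟨x, y, hux, huy, huv, hxy, hxv, hyv, a1, a2, a3⟩
    rw [pathGraph_adj] at a1 a2 a3
    have e1 := Fin.val_ne_of_ne hux
    have e2 := Fin.val_ne_of_ne huy
    have e3 := Fin.val_ne_of_ne huv
    have e4 := Fin.val_ne_of_ne hxy
    have e5 := Fin.val_ne_of_ne hxv
    have e6 := Fin.val_ne_of_ne hyv
    omega
  constructor
  · intro h3
    have h1 : (1:ℕ) ∈ {k : ℕ | ∃ f : Fin n → Fin k, IsEInjColoring (pathGraph n) f} := by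
      refine ⟨fun _ => 0, fun u v hP => ?_⟩
      obtain ⟨x, y, hux, huy, huv, hxy, hxv, hyv, -, -, -⟩ := hP
      have e1 := Fin.val_ne_of_ne hux
      have e2 := Fin.val_ne_of_ne huy
      have e3 := Fin.val_ne_of_ne huv
      have e4 := Fin.val_ne_of_ne hxy
      have e5 := Fin.val_ne_of_ne hxv
      have e6 := Fin.val_ne_of_ne hyv
      have := u.isLt; have := v.isLt; have := x.isLt; have := y.isLt
      omega
    refine le_antisymm (Nat.sInf_le h1) ?_
    refine Nat.one_le_iff_ne_zero.mpr (fun hz => ?_)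
    rcases Nat.sInf_eq_zero.mp hz with h | h
    · exact h0 h
    · exact (h ▸ h1 : (1:ℕ) ∈ (∅ : Set ℕ))
  · intro h3
    have h2 : (2:ℕ) ∈ {k : ℕ | ∃ f : Fin n → Fin k, IsEInjColoring (pathGraph n) f} := by
      refine ⟨fun i => if (i:ℕ) % 6 < 3 then 0 else 1, fun u v hP => ?_⟩
      have hd := hdist u v hP
      by_cases c1 : (u:ℕ) % 6 < 3 <;> by_cases c2 : (v:ℕ) % 6 < 3 <;>
        simp only [c1, c2, if_true, if_false, ne_eq] <;> omega
    have h1 : (1:ℕ) ∉ {k : ℕ | ∃ f : Fin n → Fin k, IsEInjColoring (pathGraph n) f} := by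
      rintro ⟨f, hf⟩
      have hP : P4Ends (pathGraph n) ⟨0, by omega⟩ ⟨3, by omega⟩ := by
        refine ⟨⟨1, by omega⟩, ⟨2, by omega⟩, ?_, ?_, ?_, ?_, ?_, ?_, ?_, ?_, ?_⟩ <;>
          first
          | (intro h; exact absurd (congrArg Fin.val h) (by simp))
          | (rw [pathGraph_adj]; simp)
      exact hf _ _ hP (Subsingleton.elim _ _)
    refine le_antisymm (Nat.sInf_le h2) ?_
    refine le_csInf ⟨2, h2⟩ (fun k hk => ?_)
    by_contra hlt
    interval_cases k
    · exact h0 hk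
    · exact h1 hk
end

section
/- For the cycle graph C_n on n ≥ 3 vertices: χ_ei(C_3) = 1; χ_ei(C_n) = 2 if n ≥ 4 and n is even; and χ_ei(C_n) = 3 if n ≥ 4 and n is odd. -/
open SimpleGraph

namespace Aux

open Fin.CommRing

lemma natInf_eq {S : Set ℕ} {k : ℕ} (hk : k ∈ S) (h : ∀ j < k, j ∉ S) : sInf S = k :=
  le_antisymm (Nat.sInf_le hk)
    (le_of_not_gt fun hlt => h _ hlt (Nat.sInf_mem ⟨k, hk⟩))

lemma adj_cases {m : ℕ} {a b : Fin (m+4)} (h : (cycleGraph (m+4)).Adj a b) :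
    b = a + 1 ∨ b = a - 1 := by
  have h' : (cycleGraph (m+2+2)).Adj a b := h
  rw [cycleGraph_adj] at h'
  rcases h' with h' | h'
  · right; rw [eq_sub_iff_add_eq, ← h']; ring
  · left; rw [← h']; ring

lemma p4_cycle {m : ℕ} {u v : Fin (m+4)} (h : P4Ends (cycleGraph (m+4)) u v) :
    v = u + 3 ∨ v = u - 3 := by
  obtain ⟨x, y, hux, huy, huv, hxy, hxv, hyv, a1, a2, a3⟩ := h
  rcases adj_cases a1 with rfl | rfl <;> rcases adj_cases a2 with rfl | rfl <;>
    rcases adj_cases a3 with rfl | rfl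
  · left; ring
  · exact absurd ((by ring : u + 1 + 1 - 1 = u + 1)) (Ne.symm hxv)
  · exact absurd ((by ring : u + 1 - 1 = u).symm) huy
  · exact absurd ((by ring : u + 1 - 1 = u).symm) huy
  · exact absurd ((by ring : u - 1 + 1 = u).symm) huy
  · exact absurd ((by ring : u - 1 + 1 = u).symm) huy
  · exact absurd ((by ring : u - 1 - 1 + 1 = u - 1)) (Ne.symm hxv)
  · right; ring

lemma adj_of_succ {m : ℕ} {a b : Fin (m+4)} (h : b = a + 1) :
    (cycleGraph (m+4)).Adj a b := by
  have : (cycleGraph (m+2+2)).Adj a b := by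
    rw [cycleGraph_adj]; right; rw [h]; ring
  exact this

lemma shift_ne {m : ℕ} (u : Fin (m+4)) {c : ℕ} (h1 : 0 < c) (h2 : c < m + 4) :
    u ≠ u + (c : Fin (m+4)) := by
  intro h
  rw [Fin.ext_iff, Fin.val_add, Fin.val_natCast] at h
  rw [Nat.mod_eq_of_lt h2] at h
  have hu := u.isLt
  rcases Nat.lt_or_ge (u.val + c) (m+4) with hl | hl
  · rw [Nat.mod_eq_of_lt hl] at h; omega
  · rw [Nat.mod_eq_sub_mod hl, Nat.mod_eq_of_lt (by omega)] at h; omega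

lemma p4_shift3 {m : ℕ} (u : Fin (m+4)) : P4Ends (cycleGraph (m+4)) u (u + 3) := by
  refine ⟨u + 1, u + 2, ?_, ?_, ?_, ?_, ?_, ?_, ?_, ?_, ?_⟩
  · exact fun h => shift_ne u (c := 1) one_pos (by omega) (h.trans (by push_cast; ring))
  · exact fun h => shift_ne u (c := 2) (by omega) (by omega) (h.trans (by push_cast; ring))
  · exact fun h => shift_ne u (c := 3) (by omega) (by omega) (h.trans (by push_cast; ring))
  · exact fun h => shift_ne (u+1) (c := 1) one_pos (by omega) (h.trans (by push_cast; ring))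
  · exact fun h => shift_ne (u+1) (c := 2) (by omega) (by omega) (h.trans (by push_cast; ring))
  · exact fun h => shift_ne (u+2) (c := 1) one_pos (by omega) (h.trans (by push_cast; ring))
  · exact adj_of_succ rfl
  · exact adj_of_succ (by ring)
  · exact adj_of_succ (by ring)

lemma coloring_of_claim {m k : ℕ} (f : Fin (m+4) → Fin k)
    (h : ∀ u, f u ≠ f (u + 3)) : IsEInjColoring (cycleGraph (m+4)) f := by
  intro u v hp
  rcases p4_cycle hp with rfl | rfl
  · exact h u
  · have := h (u - 3)
    rw [show u - 3 + 3 = u by ring] at this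
    exact this.symm

lemma val_add3 {m : ℕ} (u : Fin (m+4)) : (u + 3).val = (u.val + 3) % (m + 4) := by
  rw [Fin.val_add]; rfl

lemma zero_notMem {m : ℕ} :
    (0 : ℕ) ∉ {k : ℕ | ∃ f : Fin (m+4) → Fin k, IsEInjColoring (cycleGraph (m+4)) f} := by
  rintro ⟨f, -⟩; exact (f 0).elim0

lemma one_notMem {m : ℕ} :
    (1 : ℕ) ∉ {k : ℕ | ∃ f : Fin (m+4) → Fin k, IsEInjColoring (cycleGraph (m+4)) f} := by
  rintro ⟨f, hf⟩
  exact hf 0 (0 + 3) (p4_shift3 0) (Subsingleton.elim _ _)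

lemma two_notMem {m : ℕ} (hm : Odd (m + 4)) :
    (2 : ℕ) ∉ {k : ℕ | ∃ f : Fin (m+4) → Fin k, IsEInjColoring (cycleGraph (m+4)) f} := by
  rintro ⟨f, hf⟩
  have h3 : ∀ u : Fin (m+4), f u ≠ f (u + 3) := fun u => hf u (u + 3) (p4_shift3 u)
  have h03 : f 0 ≠ f 3 := by have := h3 0; rwa [zero_add] at this
  have key : ∀ a b c : Fin 2, a ≠ b → c ≠ a → c = b := by decide
  have claim : ∀ k : ℕ, f ((3 * k : ℕ) : Fin (m+4)) =
      if k % 2 = 0 then f 0 else f 3 := by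
    intro k
    induction k with
    | zero => simp
    | succ k ih =>
      have hc : ((3 * (k+1) : ℕ) : Fin (m+4)) = ((3 * k : ℕ) : Fin (m+4)) + 3 := by
        push_cast; ring
      rw [hc]
      rcases Nat.even_or_odd k with he | ho
      · have hk : k % 2 = 0 := Nat.even_iff.mp he
        have hk1 : (k+1) % 2 = 1 := by omega
        rw [hk1]; simp only [hk, if_true, one_ne_zero, if_false] at ih ⊢
        exact key (f 0) (f 3) _ h03 (by rw [← ih]; exact (h3 _).symm)
      · have hk : k % 2 = 1 := Nat.odd_iff.mp ho
        have hk1 : (k+1) % 2 = 0 := by omega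
        rw [hk1]; simp only [hk, if_true, one_ne_zero, if_false] at ih ⊢
        exact key (f 3) (f 0) _ (Ne.symm h03) (by rw [← ih]; exact (h3 _).symm)
  have hodd : (m + 4) % 2 = 1 := Nat.odd_iff.mp hm
  have hend := claim (m + 4)
  rw [if_neg (by omega)] at hend
  have hz : ((3 * (m + 4) : ℕ) : Fin (m+4)) = 0 := by
    rw [Nat.cast_mul, Fin.natCast_self, mul_zero]
  rw [hz] at hend
  exact h03 hend

end Aux

open Aux in
theorem stmt_10 (n : ℕ) (hn : 3 ≤ n) :
    (n = 3 → eChi (cycleGraph n) = 1) ∧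
    (4 ≤ n → Even n → eChi (cycleGraph n) = 2) ∧
    (4 ≤ n → Odd n → eChi (cycleGraph n) = 3) := by
  refine ⟨?_, ?_, ?_⟩
  · rintro rfl
    have hno : ∀ u v : Fin 3, ¬ P4Ends (cycleGraph 3) u v := by
      rintro u v ⟨x, y, h1, h2, h3, h4, h5, h6, -, -, -⟩
      simp only [ne_eq, Fin.ext_iff] at h1 h2 h3 h4 h5 h6
      have := u.isLt; have := x.isLt; have := y.isLt; have := v.isLt
      omega
    refine natInf_eq ⟨fun _ => 0, fun u v hp => absurd hp (hno u v)⟩ ?_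
    intro j hj hjS
    interval_cases j
    obtain ⟨f, -⟩ := hjS
    exact (f 0).elim0
  · intro hn4 hev
    obtain ⟨m, rfl⟩ : ∃ m, n = m + 4 := ⟨n - 4, by omega⟩
    have hdvd : 2 ∣ m + 4 := hev.two_dvd
    refine natInf_eq ?_ ?_
    · refine ⟨fun v => ⟨v.val % 2, by omega⟩, coloring_of_claim _ ?_⟩
      intro u
      simp only [ne_eq, Fin.mk.injEq, val_add3]
      rw [Nat.mod_mod_of_dvd _ hdvd]
      omega
    · intro j hj
      interval_cases j
      · exact zero_notMem
      · exact one_notMem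
  · intro hn4 hodd
    obtain ⟨m, rfl⟩ : ∃ m, n = m + 4 := ⟨n - 4, by omega⟩
    have hm2 : m % 2 = 1 := by have := Nat.odd_iff.mp hodd; omega
    refine natInf_eq ?_ ?_
    · -- exhibit a 3-coloring
      rcases Nat.lt_or_ge m 3 with hm | hm
      · -- m = 1, n = 5
        have hm1 : m = 1 := by omega
        subst hm1
        refine ⟨![0, 1, 1, 2, 0], coloring_of_claim _ ?_⟩
        decide
      · -- n ≥ 7
        refine ⟨fun u => if u.val = 0 ∨ u.val = m + 2 ∨ u.val = m + 3 then (2 : Fin 3)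
            else ⟨u.val % 2, by omega⟩, coloring_of_claim _ ?_⟩
        intro u
        have ha := u.isLt
        have hb : (u + 3).val = u.val + 3 ∨
            (u.val ≥ m + 1 ∧ (u + 3).val = u.val - (m + 1)) := by
          rw [val_add3]
          rcases Nat.lt_or_ge (u.val + 3) (m + 4) with hl | hl
          · left; exact Nat.mod_eq_of_lt hl
          · right
            refine ⟨by omega, ?_⟩
            rw [Nat.mod_eq_sub_mod hl, Nat.mod_eq_of_lt (by omega)]
            omega
        simp only [ne_eq, Fin.ext_iff]
        split_ifs <;> simp_all [-Fin.val_eq_zero_iff] <;> omega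
    · intro j hj
      interval_cases j
      · exact zero_notMem
      · exact one_notMem
      · exact two_notMem hodd
end

section
/- For the complete graph K_n on n ≥ 1 vertices: χ_ei(K_n) = 1 if n ≤ 3, and χ_ei(K_n) = n if n > 3. -/
open SimpleGraph

theorem stmt_11 (n : ℕ) (hn : 1 ≤ n) :
    (n ≤ 3 → eChi (⊤ : SimpleGraph (Fin n)) = 1) ∧
    (3 < n → eChi (⊤ : SimpleGraph (Fin n)) = n) := by

  constructor
  · intro h3
    apply le_antisymm
    · apply Nat.sInf_le
      refine ⟨fun _ => 0, fun u v huv => ?_⟩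
      exfalso
      obtain ⟨x, y, h1, h2, h3', h4, h5, h6, _⟩ := huv
      have hcard : ({u, x, y, v} : Finset (Fin n)).card = 4 := by
        rw [Finset.card_insert_of_notMem (by simp [h1, h2, h3']),
          Finset.card_insert_of_notMem (by simp [h4, h5]),
          Finset.card_insert_of_notMem (by simp [h6]), Finset.card_singleton]
      have := Finset.card_le_univ ({u, x, y, v} : Finset (Fin n))
      rw [hcard] at this
      simp at this
      omega
    · by_contra hlt
      push_neg at hlt
      interval_cases h : eChi (⊤ : SimpleGraph (Fin n))
      have h0 : 0 ∈ {k : ℕ | ∃ f : Fin n → Fin k, IsEInjColoring (⊤ : SimpleGraph (Fin n)) f} := by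
        rcases (Nat.sInf_eq_zero.mp h) with h' | h'
        · exact h'
        · exfalso
          apply Set.notMem_empty 1
          rw [← h']
          refine ⟨fun _ => 0, fun u v huv => ?_⟩
          exfalso
          obtain ⟨x, y, h1, h2, h3', h4, h5, h6, _⟩ := huv
          have hcard : ({u, x, y, v} : Finset (Fin n)).card = 4 := by
            rw [Finset.card_insert_of_notMem (by simp [h1, h2, h3']),
              Finset.card_insert_of_notMem (by simp [h4, h5]),
              Finset.card_insert_of_notMem (by simp [h6]), Finset.card_singleton]
          have := Finset.card_le_univ ({u, x, y, v} : Finset (Fin n))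
          rw [hcard] at this
          simp at this
          omega
      obtain ⟨f, -⟩ := h0
      exact (f ⟨0, hn⟩).elim0
  · intro h3
    -- key: any two distinct vertices are P4 ends
    have key : ∀ u v : Fin n, u ≠ v → P4Ends (⊤ : SimpleGraph (Fin n)) u v := by
      intro u v huv
      have hcard : 2 ≤ ({u, v} : Finset (Fin n))ᶜ.card := by
        have h2 : ({u, v} : Finset (Fin n)).card ≤ 2 := Finset.card_insert_le _ _ |>.trans (by simp)
        have := Finset.card_compl ({u, v} : Finset (Fin n))
        simp only [Fintype.card_fin] at this
        omega
      obtain ⟨x, hx, y, hy, hxy⟩ := Finset.one_lt_card.mp (by omega : 1 < ({u, v} : Finset (Fin n))ᶜ.card)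
      simp only [Finset.mem_compl, Finset.mem_insert, Finset.mem_singleton, not_or] at hx hy
      exact ⟨x, y, fun h => hx.1 h.symm, fun h => hy.1 h.symm, huv, hxy,
        fun h => hx.2 h, fun h => hy.2 h,
        by simp [SimpleGraph.top_adj]; exact fun h => hx.1 h.symm,
        by simp [SimpleGraph.top_adj, hxy],
        by simp [SimpleGraph.top_adj]; exact fun h => hy.2 h⟩
    apply le_antisymm
    · apply Nat.sInf_le
      refine ⟨id, fun u v huv => ?_⟩
      obtain ⟨_, _, _, _, huv', _⟩ := huv
      simpa using huv'
    · refine le_csInf ⟨n, ⟨id, fun u v huv => by obtain ⟨_, _, _, _, huv', _⟩ := huv; simpa using huv'⟩⟩ ?_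
      rintro k ⟨f, hf⟩
      have hinj : Function.Injective f := by
        intro u v h
        by_contra hne
        exact hf u v (key u v hne) h
      simpa using Fintype.card_le_of_injective f hinj
end

section
/- For the wheel graph W_n with n ≥ 3 (a cycle C_n together with one universal vertex adjacent to all cycle vertices, so W_n has n + 1 vertices), the e-injective chromatic number is χ_ei(W_n) = n + 1. -/
open SimpleGraph

lemma wheel_p4ends (m : ℕ) (u v : Fin (m+3) ⊕ Unit) (huv : u ≠ v) :
    P4Ends (joinGraph (cycleGraph (m+3)) (⊥ : SimpleGraph Unit)) u v := by
  have h2 : (2 : Fin (m+3)) ≠ 0 := by simp [Fin.ext_iff, Fin.val_two, Nat.mod_eq_of_lt (show 2 < m+3 by omega)]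
  have hshift : ∀ a : Fin (m+3), a + 1 ≠ a := by
    intro a h; rw [add_eq_left] at h; exact one_ne_zero h
  have h2add : ∀ a : Fin (m+3), a + 1 + 1 ≠ a := by
    intro a h
    rw [add_assoc, (by rfl : (1 : Fin (m+3)) + 1 = 2), add_eq_left] at h
    exact h2 h
  have hcyc : ∀ a : Fin (m+3), (cycleGraph (m+3)).Adj (a+1) a := by
    intro a; rw [cycleGraph_adj']; left; simp
  have hcyc' : ∀ a : Fin (m+3), (cycleGraph (m+3)).Adj (a-1) a := by
    intro a
    have := hcyc (a-1)
    rw [sub_add_cancel] at this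
    exact this.symm
  rcases u with i | u
  · rcases v with j | v
    · have hij : i ≠ j := by simpa using huv
      by_cases hc : i = j + 1
      · refine ⟨Sum.inr (), Sum.inl (j - 1), by simp, ?_, huv, by simp, by simp, ?_,
          trivial, trivial, hcyc' j⟩
        · simp only [ne_eq, Sum.inl.injEq]
          intro h
          apply h2add j
          rw [hc] at h
          rw [h, sub_add_cancel]
        · simp only [ne_eq, Sum.inl.injEq]
          intro h
          apply hshift (j - 1)
          rw [sub_add_cancel, h]
      · refine ⟨Sum.inr (), Sum.inl (j + 1), by simp, by simpa using hc, huv, by simp, by simp,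
          by simpa using fun h => hshift j h.symm, trivial, trivial, hcyc j⟩
    · refine ⟨Sum.inl (i + 1), Sum.inl (i + 1 + 1), ?_, ?_, by simp, ?_, by simp, by simp,
        (hcyc i).symm, (hcyc (i+1)).symm, trivial⟩
      · simpa using fun h => hshift i h.symm
      · simpa using fun h => h2add i h.symm
      · simpa using fun h => hshift (i+1) h.symm
  · rcases v with j | v
    · refine ⟨Sum.inl (j + 1 + 1), Sum.inl (j + 1), by simp, by simp, by simp, ?_, ?_, ?_,
        trivial, hcyc (j+1), hcyc j⟩
      · simpa using fun h => hshift (j+1) h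
      · simpa using h2add j
      · simpa using hshift j
    · exact absurd rfl huv

theorem stmt_12 (n : ℕ) (hn : 3 ≤ n) :
    eChi (joinGraph (cycleGraph n) (⊥ : SimpleGraph Unit)) = n + 1 := by
  obtain ⟨m, rfl⟩ : ∃ m, n = m + 3 := ⟨n - 3, by omega⟩
  have hcard : Fintype.card (Fin (m+3) ⊕ Unit) = m + 3 + 1 := by simp
  have hmem : (m + 3 + 1) ∈ {k : ℕ | ∃ f : (Fin (m+3) ⊕ Unit) → Fin k,
      IsEInjColoring (joinGraph (cycleGraph (m+3)) (⊥ : SimpleGraph Unit)) f} := by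
    refine ⟨Fintype.equivFinOfCardEq hcard, fun u v h hf => ?_⟩
    obtain ⟨x, y, -, -, huv, -⟩ := h
    exact huv ((Fintype.equivFinOfCardEq hcard).injective hf)
  refine le_antisymm (Nat.sInf_le hmem) (le_csInf ⟨_, hmem⟩ ?_)
  rintro k ⟨f, hf⟩
  have hinj : Function.Injective f := by
    intro a b hab
    by_contra hne
    exact hf a b (wheel_p4ends m a b hne) hab
  calc m + 3 + 1 = Fintype.card (Fin (m+3) ⊕ Unit) := hcard.symm
    _ ≤ Fintype.card (Fin k) := Fintype.card_le_of_injective f hinj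
    _ = k := Fintype.card_fin k
end
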